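/- arXiv:0802.0853 — 3 statements merged into one kernel-verified Lean document; each statement's English description precedes it below -/
import Mathlib

section
/- Let K be a field of characteristic different from 2 and let u2, u3, u4 ∈ K[x0,x1,x2] be polynomials. Let q = (q0,q1,q2,q3) ∈ K^4 and write a = (q0,q1,q2). Suppose that q is a singular point of the quartic F = u2*x3^2 + 2*u3*x3 + u4, that is: u2(a)*q3^2 + 2*u3(a)*q3 + u4(a) = 0, u2(a)*q3 + u3(a) = 0 (vanishing of ∂F/∂x3 up to the factor 2), and for each i ∈ {0,1,2}, (∂u2/∂xi)(a)*q3^2 + 2*(∂u3/∂xi)(a)*q3 + (∂u4/∂xi)(a) = 0 (vanishing of ∂F/∂xi). Then a is a singular point of the discriminant sextic G = u3^2 - u2*u4, i.e. G(a) = 0 and (∂G/∂xi)(a) = 0 for each i ∈ {0,1,2}. (Second part of Proposition 2.2: if Q ∈ X is a singular point different from P0, then π(Q) is a singular point of C_X.) -/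
open MvPolynomial

/-!
Completing the square in `x3`: `u2 * F = (u2*x3 + u3)^2 - G`, hence
`G = (u2*q3 + u3)^2 - u2 * F(·, q3)` as polynomials in `x0, x1, x2`. At `a` the linear form
`u2*q3 + u3` vanishes and `F(·, q3)` is singular, so both terms are singular at `a`.
-/

namespace MvPolynomial

variable {σ R : Type*} [CommRing R]

def IsSingularAt (a : σ → R) (f : MvPolynomial σ R) : Prop :=
  eval a f = 0 ∧ ∀ i, eval a (pderiv i f) = 0

theorem isSingularAt_sq {a : σ → R} {f : MvPolynomial σ R} (hf : eval a f = 0) :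
    IsSingularAt a (f ^ 2) :=
  ⟨by simp [hf], fun i => by simp [hf]⟩

theorem IsSingularAt.mul_left {a : σ → R} {g : MvPolynomial σ R} (hg : IsSingularAt a g)
    (f : MvPolynomial σ R) : IsSingularAt a (f * g) := by
  refine ⟨by simp [hg.1], fun i => ?_⟩
  simp [hg.1, hg.2 i]

theorem IsSingularAt.sub {a : σ → R} {f g : MvPolynomial σ R} (hf : IsSingularAt a f)
    (hg : IsSingularAt a g) : IsSingularAt a (f - g) :=
  ⟨by simp [hf.1, hg.1], fun i => by simp [hf.2 i, hg.2 i]⟩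

end MvPolynomial

theorem sq_sub_mul_eq_sq_sub_mul_quadratic {R : Type*} [CommRing R] (u2 u3 u4 t : R) :
    u3 ^ 2 - u2 * u4 = (u2 * t + u3) ^ 2 - u2 * (u2 * t ^ 2 + 2 * u3 * t + u4) := by
  ring

theorem singular_point_maps_to_singular_point_general (K : Type*) [Field K]
    (u2 u3 u4 : MvPolynomial (Fin 3) K) (a : Fin 3 → K) (q3 : K)
    (hF : eval a u2 * q3 ^ 2 + 2 * eval a u3 * q3 + eval a u4 = 0)
    (hF3 : eval a u2 * q3 + eval a u3 = 0)
    (hFi : ∀ i : Fin 3,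
      eval a (pderiv i u2) * q3 ^ 2 + 2 * eval a (pderiv i u3) * q3
        + eval a (pderiv i u4) = 0) :
    eval a (u3 ^ 2 - u2 * u4) = 0 ∧
      ∀ i : Fin 3, eval a (pderiv i (u3 ^ 2 - u2 * u4)) = 0 := by
  have hline : eval a (u2 * C q3 + u3) = 0 := by simpa using hF3
  have hfiber : IsSingularAt a (u2 * C q3 ^ 2 + 2 * u3 * C q3 + u4) := by
    refine ⟨by simpa using hF, fun i => ?_⟩
    simp only [two_mul, map_add, Derivation.leibniz, Derivation.leibniz_pow, Nat.add_one_sub_one,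
      pow_one, derivation_C, smul_eq_mul, mul_zero, nsmul_zero, zero_add, map_mul, map_pow, eval_C]
    linear_combination hFi i
  rw [sq_sub_mul_eq_sq_sub_mul_quadratic u2 u3 u4 (C q3)]
  exact (isSingularAt_sq hline).sub (hfiber.mul_left u2)

/-- Proposition 2.2 (singular points): if `q = (a, q3)` is a singular point of
the nodal quartic `F = u2*x3^2 + 2*u3*x3 + u4` (other than the node `P0`), then
its projection `a` is a singular point of the discriminant sextic
`G = u3^2 - u2*u4`. -/
theorem singular_point_maps_to_singular_point (K : Type*) [Field K]
    (hchar : (2 : K) ≠ 0)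
    (u2 u3 u4 : MvPolynomial (Fin 3) K) (a : Fin 3 → K) (q3 : K)
    (hF : eval a u2 * q3 ^ 2 + 2 * eval a u3 * q3 + eval a u4 = 0)
    (hF3 : eval a u2 * q3 + eval a u3 = 0)
    (hFi : ∀ i : Fin 3,
      eval a (pderiv i u2) * q3 ^ 2 + 2 * eval a (pderiv i u3) * q3
        + eval a (pderiv i u4) = 0) :
    eval a (u3 ^ 2 - u2 * u4) = 0 ∧
      ∀ i : Fin 3, eval a (pderiv i (u3 ^ 2 - u2 * u4)) = 0 :=
  singular_point_maps_to_singular_point_general K u2 u3 u4 a q3 hF hF3 hFi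
end

section
/- Let R be a commutative ring, let x, u2, u3, u4 ∈ R, and set F = u2*x^2 + 2*u3*x + u4 and G = u3^2 - u2*u4. Let q be a maximal ideal of R with F ∈ q and G ∈ q. Then G ∈ q^2 if and only if either F ∈ q^2, or all three of u2, u3, u4 lie in q. (This is the ideal-theoretic content of Lemma 2.5: for Q ∈ X with π(Q) ∈ C_X, the point π(Q) is singular on C_X if and only if Q ∈ Sing(X) or Q lies on the intersection of the cones Y2 ∩ Y3 ∩ Y4 defined by u2, u3, u4.) -/
/-!
The identity `u2 * F = (u2 * x + u3) ^ 2 - G` drives everything. If `u2 ∉ q`, then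
`u2 * x + u3 ∈ q` because `q` is prime, so `G ≡ -u2 * F` modulo `q ^ 2`, and `u2` may be
cancelled since `q ^ 2` is `q`-primary. If `u2 ∈ q`, then `G ∈ q` forces `u3 ∈ q`, `F ∈ q`
forces `u4 ∈ q`, and then `G = u3 * u3 - u2 * u4 ∈ q ^ 2` holds trivially.
-/

namespace Ideal

variable {R : Type*} [CommRing R] {q : Ideal R}

theorem IsMaximal.mul_mem_pow_iff (hq : q.IsMaximal) {n : ℕ} (hn : n ≠ 0) {a b : R}
    (ha : a ∉ q) : a * b ∈ q ^ n ↔ b ∈ q ^ n := by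
  have hrad : radical (q ^ n) = q := by rw [radical_pow q hn, hq.isPrime.radical]
  have hprimary : (q ^ n).IsPrimary := isPrimary_of_isMaximal_radical (by rwa [hrad])
  refine ⟨fun hab => ?_, mul_mem_left _ a⟩
  rw [mul_comm] at hab
  exact ((isPrimary_iff.mp hprimary).2 hab).resolve_right (by rwa [hrad])

variable {x u2 u3 u4 : R}

theorem sq_sub_mul_mem_sq (h2 : u2 ∈ q) (h3 : u3 ∈ q) (h4 : u4 ∈ q) :
    u3 ^ 2 - u2 * u4 ∈ q ^ 2 := by
  rw [sq, sq]
  exact sub_mem (mul_mem_mul h3 h3) (mul_mem_mul h2 h4)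

theorem mem_and_mem_of_quadratic_mem [q.IsPrime] (hF : u2 * x ^ 2 + 2 * u3 * x + u4 ∈ q)
    (hG : u3 ^ 2 - u2 * u4 ∈ q) (h2 : u2 ∈ q) : u3 ∈ q ∧ u4 ∈ q := by
  have h3 : u3 ∈ q := by
    refine IsPrime.mem_of_pow_mem ‹_› 2 ?_
    have : u3 ^ 2 = (u3 ^ 2 - u2 * u4) + u2 * u4 := by ring
    exact this ▸ add_mem hG (mul_mem_right _ _ h2)
  refine ⟨h3, ?_⟩
  have : u4 = (u2 * x ^ 2 + 2 * u3 * x + u4) - (u2 * x ^ 2 + 2 * u3 * x) := by ring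
  rw [this]
  exact sub_mem hF (add_mem (mul_mem_right _ _ h2) (mul_mem_right _ _ (mul_mem_left _ _ h3)))

theorem discr_mem_sq_iff_of_not_mem (hq : q.IsMaximal)
    (hF : u2 * x ^ 2 + 2 * u3 * x + u4 ∈ q) (hG : u3 ^ 2 - u2 * u4 ∈ q) (h2 : u2 ∉ q) :
    u3 ^ 2 - u2 * u4 ∈ q ^ 2 ↔ u2 * x ^ 2 + 2 * u3 * x + u4 ∈ q ^ 2 := by
  have hid : u3 ^ 2 - u2 * u4 = (u2 * x + u3) ^ 2 - u2 * (u2 * x ^ 2 + 2 * u3 * x + u4) := by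
    ring
  have hlin : u2 * x + u3 ∈ q := by
    refine hq.isPrime.mem_of_pow_mem 2 ?_
    rw [sub_eq_iff_eq_add'.mp hid.symm]
    exact add_mem (mul_mem_left _ _ hF) hG
  rw [hid, Submodule.sub_mem_iff_right _ (pow_mem_pow hlin 2), hq.mul_mem_pow_iff two_ne_zero h2]

end Ideal

open Ideal in
/-- Ideal-theoretic content of Lemma 2.5: let `q` be a maximal ideal containing
`F = u2*x^2 + 2*u3*x + u4` and `G = u3^2 - u2*u4`. Then `G ∈ q^2` if and only
if `F ∈ q^2` (the corresponding point of the quartic is singular) or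
`u2, u3, u4 ∈ q` (the point lies on `Y2 ∩ Y3 ∩ Y4`). -/
theorem lemma25_ideal (R : Type*) [CommRing R] (x u2 u3 u4 : R)
    (q : Ideal R) (hq : q.IsMaximal)
    (hF : u2 * x ^ 2 + 2 * u3 * x + u4 ∈ q)
    (hG : u3 ^ 2 - u2 * u4 ∈ q) :
    u3 ^ 2 - u2 * u4 ∈ q ^ 2 ↔
      (u2 * x ^ 2 + 2 * u3 * x + u4 ∈ q ^ 2 ∨ (u2 ∈ q ∧ u3 ∈ q ∧ u4 ∈ q)) := by
  by_cases h2 : u2 ∈ q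
  · obtain ⟨h3, h4⟩ := mem_and_mem_of_quadratic_mem (q := q) hF hG h2
    exact iff_of_true (sq_sub_mul_mem_sq h2 h3 h4) (Or.inr ⟨h2, h3, h4⟩)
  · rw [discr_mem_sq_iff_of_not_mem hq hF hG h2]
    exact (or_iff_left fun h => h2 h.1).symm
end

section
/- Let K be a field of characteristic different from 2, let u2, u3, u4 ∈ K[x0,x1,x2], and set G = u3^2 - u2*u4. Let q = (q0,q1,q2,q3) ∈ K^4, write a = (q0,q1,q2), and suppose u2(a)*q3^2 + 2*u3(a)*q3 + u4(a) = 0 (i.e. the point q lies on the quartic F = u2*x3^2 + 2*u3*x3 + u4) and G(a) = 0 (i.e. a lies on the discriminant sextic C_X). Then (∂G/∂xi)(a) = 0 for all i ∈ {0,1,2} if and only if either [u2(a)*q3 + u3(a) = 0 and (∂u2/∂xi)(a)*q3^2 + 2*(∂u3/∂xi)(a)*q3 + (∂u4/∂xi)(a) = 0 for all i ∈ {0,1,2}] (i.e. q is a singular point of the quartic F), or u2(a) = u3(a) = u4(a) = 0. (Pointwise form of Lemma 2.5: π(Q) ∈ Sing C_X if and only if Q ∈ Sing(X) ∪ (Y2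 ∩ Y3 ∩ Y4).) -/
/-!
Since `(u2 q3 + u3)² = u2 · F + G` at `a`, the hypotheses make `q3` a double root of
`u2(a) t² + 2 u3(a) t + u4(a)`, so `u3(a) = -u2(a) q3` and `u4(a) = u2(a) q3²`.
Substituting these into `∂G/∂xᵢ = 2 u3 ∂u3/∂xᵢ - ∂u2/∂xᵢ u4 - u2 ∂u4/∂xᵢ` gives
`∂G/∂xᵢ(a) = -u2(a) · ∂F/∂xᵢ(q)`, and both sides of the equivalence reduce to
`u2(a) = 0 ∨ ∀ i, ∂F/∂xᵢ(q) = 0`.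
-/

open MvPolynomial

theorem mul_add_eq_zero_of_root_of_sq_sub_mul_eq_zero {R : Type*} [CommRing R] [IsReduced R]
    {A B C q : R} (hF : A * q ^ 2 + 2 * B * q + C = 0) (hG : B ^ 2 - A * C = 0) :
    A * q + B = 0 :=
  IsReduced.eq_zero _ ⟨2, by linear_combination A * hF + hG⟩

theorem eval_pderiv_sq_sub_mul_eq_neg_mul {σ R : Type*} [CommRing R]
    (u2 u3 u4 : MvPolynomial σ R) (a : σ → R) (q3 : R) (i : σ)
    (hq : eval a u2 * q3 + eval a u3 = 0)
    (hF : eval a u2 * q3 ^ 2 + 2 * eval a u3 * q3 + eval a u4 = 0) :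
    eval a (pderiv i (u3 ^ 2 - u2 * u4)) =
      -(eval a u2 * (eval a (pderiv i u2) * q3 ^ 2 + 2 * eval a (pderiv i u3) * q3
        + eval a (pderiv i u4))) := by
  simp only [pow_two, map_sub, pderiv_mul, map_add, map_mul]
  linear_combination (2 * eval a (pderiv i u3) + 2 * q3 * eval a (pderiv i u2)) * hq
    - eval a (pderiv i u2) * hF

theorem lemma25_pointwise_general (K : Type*) [Field K]
    (u2 u3 u4 : MvPolynomial (Fin 3) K) (a : Fin 3 → K) (q3 : K)
    (hF : eval a u2 * q3 ^ 2 + 2 * eval a u3 * q3 + eval a u4 = 0)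
    (hG : eval a (u3 ^ 2 - u2 * u4) = 0) :
    (∀ i : Fin 3, eval a (pderiv i (u3 ^ 2 - u2 * u4)) = 0) ↔
      ((eval a u2 * q3 + eval a u3 = 0 ∧
          ∀ i : Fin 3,
            eval a (pderiv i u2) * q3 ^ 2 + 2 * eval a (pderiv i u3) * q3
              + eval a (pderiv i u4) = 0) ∨
        (eval a u2 = 0 ∧ eval a u3 = 0 ∧ eval a u4 = 0)) := by
  rw [map_sub, map_mul, map_pow] at hG
  have hq := mul_add_eq_zero_of_root_of_sq_sub_mul_eq_zero hF hG
  simp only [eval_pderiv_sq_sub_mul_eq_neg_mul u2 u3 u4 a q3 _ hq hF, neg_eq_zero,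
    mul_eq_zero, forall_or_left]
  constructor
  · rintro (hA | hdF)
    · refine Or.inr ⟨hA, ?_, ?_⟩
      · linear_combination hq - q3 * hA
      · linear_combination hF - 2 * q3 * hq + q3 ^ 2 * hA
    · exact Or.inl ⟨hq, hdF⟩
  · rintro (⟨-, hdF⟩ | ⟨hA, -, -⟩)
    · exact Or.inr hdF
    · exact Or.inl hA

/-- Pointwise form of Lemma 2.5: suppose the point `q = (a, q3)` lies on the
quartic `F = u2*x3^2 + 2*u3*x3 + u4` and `a` lies on the discriminant sextic
`G = u3^2 - u2*u4`. Then `a` is a singular point of `G` if and only if either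
`q` is a singular point of the quartic, or `u2(a) = u3(a) = u4(a) = 0`. -/
theorem lemma25_pointwise (K : Type*) [Field K] (hchar : (2 : K) ≠ 0)
    (u2 u3 u4 : MvPolynomial (Fin 3) K) (a : Fin 3 → K) (q3 : K)
    (hF : eval a u2 * q3 ^ 2 + 2 * eval a u3 * q3 + eval a u4 = 0)
    (hG : eval a (u3 ^ 2 - u2 * u4) = 0) :
    (∀ i : Fin 3, eval a (pderiv i (u3 ^ 2 - u2 * u4)) = 0) ↔
      ((eval a u2 * q3 + eval a u3 = 0 ∧
          ∀ i : Fin 3,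
            eval a (pderiv i u2) * q3 ^ 2 + 2 * eval a (pderiv i u3) * q3
              + eval a (pderiv i u4) = 0) ∨
        (eval a u2 = 0 ∧ eval a u3 = 0 ∧ eval a u4 = 0)) :=
  lemma25_pointwise_general K u2 u3 u4 a q3 hF hG
end
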